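/- Let N ≥ 1 and n ≥ 2. Then: (a) Y(n,0) consists exactly of the noncrossing partitions of Fin n in which the point 1 is a singleton; (b) the map α sending p ∈ Y(n,0) to the partition of Fin(n−1) obtained by deleting the point 1 (and relabelling the points 2,…,n as 1,…,n−1) is a bijection from Y(n,0) onto W(n−1,0) = NC(0,n−1); and (c) for all p, q ∈ Y(n,0) one has e_0(p,q) = N · e_0(α(p), α(q)). Consequently B(n,0) equals N · A(n−1,0) up to a simultaneous permutation of rows and columns. -/

import Mathlib

attribute [local instance] Classical.propDecidable

noncomputable instance setoidFintype {α : Type*} [Fintype α] : Fintype (Setoid α) :=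
  Fintype.ofInjective (fun p : Setoid α => p.r) fun p q h => by
    cases p; cases q; cases h; rfl

/-- A partition of `Fin n` is *crossing* if there are points `a < b < c < d` with
`a ∼ c`, `b ∼ d` and `¬ a ∼ b`. -/
def IsCrossing {n : ℕ} (p : Setoid (Fin n)) : Prop :=
  ∃ a b c d : Fin n, a < b ∧ b < c ∧ c < d ∧ p.r a c ∧ p.r b d ∧ ¬ p.r a b

/-- The point `i` is a singleton of the partition `p`. -/
def IsSingletonPt {n : ℕ} (p : Setoid (Fin n)) (i : Fin n) : Prop :=
  ∀ j : Fin n, p.r i j → j = i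

/-- `W(n,r)` (points of `Fin n` are numbered `1,…,n`, so the 1-indexed point `j`
is the index `j-1`): the set of noncrossing partitions `p` of `Fin n` such that, with
`s = ⌊r/2⌋`, none of the points `1,…,s` (for even `r`) resp. `1,…,s+1` (for odd `r`) is a
singleton of `p`, and the points `1,…,s+1` lie in pairwise different blocks of `p`. -/
def Wset (n r : ℕ) : Set (Setoid (Fin n)) :=
  {p | ¬ IsCrossing p ∧
    (∀ i : Fin n, (i : ℕ) < (if r % 2 = 0 then r / 2 else r / 2 + 1) → ¬ IsSingletonPt p i) ∧
    (∀ i j : Fin n, (i : ℕ) ≤ r / 2 → (j : ℕ) ≤ r / 2 → p.r i j → i = j)}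

/-- `Y(n,r) = W(n,r) \ W(n,r+1)`. -/
def Yset (n r : ℕ) : Set (Setoid (Fin n)) := Wset n r \ Wset n (r + 1)

/-- The graph `G(p,q)`: the smallest equivalence relation on `Fin n ⊕ Fin n` containing
`p` on the left, `q` on the right, and identifying `inl i` with `inr i` for every `i`. -/
def Gjoin {n : ℕ} (p q : Setoid (Fin n)) : Setoid (Fin n ⊕ Fin n) :=
  sInf {s | (∀ a b : Fin n, p.r a b → s.r (Sum.inl a) (Sum.inl b)) ∧
            (∀ a b : Fin n, q.r a b → s.r (Sum.inr a) (Sum.inr b)) ∧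
            (∀ i : Fin n, s.r (Sum.inl i) (Sum.inr i))}

/-- `rl(p,q)`: the number of connected components of `G(p,q)`. -/
noncomputable def rl {n : ℕ} (p q : Setoid (Fin n)) : ℕ :=
  Nat.card (Quotient (Gjoin p q))

/-- The graph `H_r(p,q)`: as `G(p,q)`, but `inl i ∼ inr i` only for 1-indexed points
`i = s+2,…,n`, i.e. for indices `≥ s+1` where `s = ⌊r/2⌋`. -/
def Hrel {n : ℕ} (r : ℕ) (p q : Setoid (Fin n)) : Setoid (Fin n ⊕ Fin n) :=
  sInf {s | (∀ a b : Fin n, p.r a b → s.r (Sum.inl a) (Sum.inl b)) ∧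
            (∀ a b : Fin n, q.r a b → s.r (Sum.inr a) (Sum.inr b)) ∧
            (∀ i : Fin n, r / 2 + 1 ≤ (i : ℕ) → s.r (Sum.inl i) (Sum.inr i))}

/-- `G(p,q)` is `r`-flawless: in `H_r(p,q)` the points `inl 1,…,inl (s+1)` are pairwise
inequivalent, the points `inr 1,…,inr (s+1)` are pairwise inequivalent, `inl i ∼ inr i`
for all `1 ≤ i ≤ s`, and for odd `r` also `inl (s+1) ∼ inr (s+1)`. -/
def RFlawless {n : ℕ} (r : ℕ) (p q : Setoid (Fin n)) : Prop :=
  (∀ i j : Fin n, (i : ℕ) ≤ r / 2 → (j : ℕ) ≤ r / 2 →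
      (Hrel r p q).r (Sum.inl i) (Sum.inl j) → i = j) ∧
  (∀ i j : Fin n, (i : ℕ) ≤ r / 2 → (j : ℕ) ≤ r / 2 →
      (Hrel r p q).r (Sum.inr i) (Sum.inr j) → i = j) ∧
  (∀ i : Fin n, (i : ℕ) < r / 2 → (Hrel r p q).r (Sum.inl i) (Sum.inr i)) ∧
  (r % 2 = 1 → ∀ i : Fin n, (i : ℕ) = r / 2 → (Hrel r p q).r (Sum.inl i) (Sum.inr i))

/-- The matrix entry `e_r(p,q) = N^{rl(p,q)}` if `G(p,q)` is `r`-flawless, else `0`. -/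
noncomputable def eEnt (N : ℕ) {n : ℕ} (r : ℕ) (p q : Setoid (Fin n)) : ℝ :=
  if RFlawless r p q then (N : ℝ) ^ rl p q else 0

/-- The fully nested partition of `Fin n`: blocks are the pairs `{i, n+1-i}`
(1-indexed), together with the middle singleton when `n` is odd. -/
def nestedSetoid (n : ℕ) : Setoid (Fin n) where
  r a b := a = b ∨ (a : ℕ) + (b : ℕ) = n - 1
  iseqv := by
    refine ⟨fun a => Or.inl rfl, ?_, ?_⟩
    · rintro a b (h | h)
      · exact Or.inl h.symm
      · exact Or.inr (by omega)
    · rintro a b c (h | h) (h' | h')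
      · exact Or.inl (h.trans h')
      · exact h ▸ Or.inr h'
      · exact Or.inr (h' ▸ h)
      · exact Or.inl (Fin.ext (by omega))

/-- Deleting the point with index `k` (0-indexed) from a partition of `Fin n`,
relabelling the later points downwards. -/
def delPt {n : ℕ} (k : ℕ) (p : Setoid (Fin n)) : Setoid (Fin (n - 1)) :=
  Setoid.comap (fun i : Fin (n - 1) =>
    if (i : ℕ) < k then ⟨(i : ℕ), by have := i.isLt; omega⟩
    else ⟨(i : ℕ) + 1, by have := i.isLt; omega⟩) p
open Sum

section Aux

variable {n : ℕ}

lemma Gjoin_left {p q : Setoid (Fin n)} {a b : Fin n} (h : p.r a b) :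
    (Gjoin p q).r (Sum.inl a) (Sum.inl b) := fun _ hs => hs.1 a b h

lemma Gjoin_right {p q : Setoid (Fin n)} {a b : Fin n} (h : q.r a b) :
    (Gjoin p q).r (Sum.inr a) (Sum.inr b) := fun _ hs => hs.2.1 a b h

lemma Gjoin_mix (p q : Setoid (Fin n)) (i : Fin n) :
    (Gjoin p q).r (Sum.inl i) (Sum.inr i) := fun _ hs => hs.2.2 i

lemma Gjoin_le {p q : Setoid (Fin n)} {s : Setoid (Fin n ⊕ Fin n)}
    (h1 : ∀ a b : Fin n, p.r a b → s.r (Sum.inl a) (Sum.inl b))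
    (h2 : ∀ a b : Fin n, q.r a b → s.r (Sum.inr a) (Sum.inr b))
    (h3 : ∀ i : Fin n, s.r (Sum.inl i) (Sum.inr i))
    {x y : Fin n ⊕ Fin n} (h : (Gjoin p q).r x y) : s.r x y :=
  h s ⟨h1, h2, h3⟩

/-- extend a setoid on `α` to `Option α` with `none` a singleton -/
def optSetoid {α : Type*} (G : Setoid α) : Setoid (Option α) where
  r a b := match a, b with
    | none, none => True
    | some x, some y => G.r x y
    | _, _ => False
  iseqv := by
    constructor
    · rintro (_|x); · trivial
      exact G.refl x
    · rintro (_|x) (_|y) h <;> simp_all only [] <;> exact G.symm h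
    · rintro (_|x) (_|y) (_|z) h h' <;> simp_all only [] <;> exact G.trans h h'

lemma optSetoid_none_some {α : Type*} {G : Setoid α} {x : α}
    (h : (optSetoid G).r none (some x)) : False := h

lemma optSetoid_some_none {α : Type*} {G : Setoid α} {x : α}
    (h : (optSetoid G).r (some x) none) : False := h

/-- shift `Fin (n-1)` into `Fin n` by adding one -/
def finShift (i : Fin (n - 1)) : Fin n := ⟨(i : ℕ) + 1, by have := i.isLt; omega⟩

lemma finShift_injective : Function.Injective (finShift (n := n)) := by
  intro a b h
  have := congrArg (fun x : Fin n => (x : ℕ)) h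
  simp only [finShift] at this
  exact Fin.ext (by omega)

lemma finShift_lt {a b : Fin (n - 1)} (h : a < b) : finShift (n := n) a < finShift b := by
  simp only [finShift, Fin.lt_def] at *
  omega

lemma delPt_zero_rel (p : Setoid (Fin n)) (i j : Fin (n - 1)) :
    (delPt 0 p).r i j ↔ p.r (finShift i) (finShift j) := Iff.rfl

end Aux
section Aux2

variable {n : ℕ}

/-- collapse map sending both copies of point 0 to `none` -/
def collapse (n : ℕ) : Fin n ⊕ Fin n → Option (Fin (n - 1) ⊕ Fin (n - 1))
  | Sum.inl i => if h : (i : ℕ) = 0 then none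
      else some (Sum.inl ⟨(i : ℕ) - 1, by have := i.isLt; omega⟩)
  | Sum.inr i => if h : (i : ℕ) = 0 then none
      else some (Sum.inr ⟨(i : ℕ) - 1, by have := i.isLt; omega⟩)

lemma finShift_mk {a : Fin n} (ha : (a : ℕ) ≠ 0) :
    finShift ⟨(a : ℕ) - 1, by have := a.isLt; omega⟩ = a := by
  simp only [finShift]
  exact Fin.ext (by simp; omega)

lemma collapse_surj (hn : 1 ≤ n) : Function.Surjective (collapse n) := by
  rintro (_ | (x | x))
  · exact ⟨Sum.inl ⟨0, hn⟩, by simp [collapse]⟩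
  · refine ⟨Sum.inl (finShift x), ?_⟩
    simp only [collapse, finShift]
    simp only [Nat.add_one_ne_zero, ↓reduceDIte]
    simp
  · refine ⟨Sum.inr (finShift x), ?_⟩
    simp only [collapse, finShift]
    simp only [Nat.add_one_ne_zero, ↓reduceDIte]
    simp

noncomputable def quotCongrSurj {α β : Type*} (f : α → β) (hf : Function.Surjective f)
    (T : Setoid β) : Quotient (Setoid.comap f T) ≃ Quotient T := by
  refine Equiv.ofBijective
    (Quotient.lift (fun x => Quotient.mk T (f x)) fun a b h => Quotient.sound h) ⟨?_, ?_⟩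
  · intro a b
    refine Quotient.inductionOn₂ a b fun a b h => ?_
    have h' : Quotient.mk T (f a) = Quotient.mk T (f b) := h
    have h2 := Quotient.exact h'
    exact Quotient.sound h2
  · intro y
    obtain ⟨b, rfl⟩ := Quotient.exists_rep y
    obtain ⟨a, rfl⟩ := hf b
    exact ⟨Quotient.mk _ a, rfl⟩

noncomputable def quotOpt {α : Type*} (G : Setoid α) :
    Quotient (optSetoid G) ≃ Option (Quotient G) := by
  refine Equiv.ofBijective
    (Quotient.lift (fun o => o.map (Quotient.mk G)) ?_) ⟨?_, ?_⟩
  · rintro (_|x) (_|y) h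
    · rfl
    · exact (optSetoid_none_some h).elim
    · exact (optSetoid_some_none h).elim
    · exact congrArg some (Quotient.sound h)
  · intro a b
    refine Quotient.inductionOn₂ a b ?_
    rintro (_|x) (_|y) h
    · rfl
    · have h' : Option.map (Quotient.mk G) none = Option.map (Quotient.mk G) (some y) := h
      simp at h'
    · have h' : Option.map (Quotient.mk G) (some x) = Option.map (Quotient.mk G) none := h
      simp at h'
    · have h' : Option.map (Quotient.mk G) (some x) = Option.map (Quotient.mk G) (some y) := h
      simp only [Option.map_some] at h'
      have h2 := Quotient.exact (Option.some.inj h')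
      exact Quotient.sound (show (optSetoid G).r (some x) (some y) from h2)
  · rintro (_|z)
    · exact ⟨Quotient.mk _ none, rfl⟩
    · obtain ⟨x, rfl⟩ := Quotient.exists_rep z
      exact ⟨Quotient.mk _ (some x), rfl⟩

end Aux2
section Aux3

variable {n : ℕ}

lemma Gjoin_collapse (hn : 1 ≤ n) (p q : Setoid (Fin n))
    (hp : IsSingletonPt p ⟨0, hn⟩) (hq : IsSingletonPt q ⟨0, hn⟩) :
    Gjoin p q = Setoid.comap (collapse n)
      (optSetoid (Gjoin (delPt 0 p) (delPt 0 q))) := by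
  set G' := Gjoin (delPt 0 p) (delPt 0 q) with hG'
  have shiftrel : ∀ u v, G'.r u v →
      (Gjoin p q).r (Sum.map finShift finShift u) (Sum.map finShift finShift v) := by
    intro u v h
    exact Gjoin_le (s := Setoid.comap (Sum.map finShift finShift) (Gjoin p q))
      (fun a b hab => Gjoin_left ((delPt_zero_rel p a b).mp hab))
      (fun a b hab => Gjoin_right ((delPt_zero_rel q a b).mp hab))
      (fun i => Gjoin_mix p q (finShift i)) h
  -- zero-detection helpers
  have hz : ∀ a b : Fin n, p.r a b → ((a : ℕ) = 0 ↔ (b : ℕ) = 0) := by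
    intro a b hab
    constructor
    · intro ha
      have : a = ⟨0, hn⟩ := Fin.ext ha
      subst this
      have := hp b hab
      simp [this]
    · intro hb
      have : b = ⟨0, hn⟩ := Fin.ext hb
      subst this
      have := hp a (p.symm hab)
      simp [this]
  have hzq : ∀ a b : Fin n, q.r a b → ((a : ℕ) = 0 ↔ (b : ℕ) = 0) := by
    intro a b hab
    constructor
    · intro ha
      have : a = ⟨0, hn⟩ := Fin.ext ha
      subst this
      have := hq b hab
      simp [this]
    · intro hb
      have : b = ⟨0, hn⟩ := Fin.ext hb
      subst this
      have := hq a (q.symm hab)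
      simp [this]
  apply le_antisymm
  · show sInf _ ≤ _
    apply sInf_le
    refine ⟨?_, ?_, ?_⟩
    · intro a b hab
      show (optSetoid G').r (collapse n (Sum.inl a)) (collapse n (Sum.inl b))
      by_cases ha : (a : ℕ) = 0
      · have hb : (b : ℕ) = 0 := (hz a b hab).mp ha
        simp only [collapse, dif_pos ha, dif_pos hb]
        trivial
      · have hb : (b : ℕ) ≠ 0 := fun h => ha ((hz a b hab).mpr h)
        simp only [collapse, dif_neg ha, dif_neg hb]
        show G'.r _ _
        refine Gjoin_left ((delPt_zero_rel p _ _).mpr ?_)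
        rw [finShift_mk ha, finShift_mk hb]
        exact hab
    · intro a b hab
      show (optSetoid G').r (collapse n (Sum.inr a)) (collapse n (Sum.inr b))
      by_cases ha : (a : ℕ) = 0
      · have hb : (b : ℕ) = 0 := (hzq a b hab).mp ha
        simp only [collapse, dif_pos ha, dif_pos hb]
        trivial
      · have hb : (b : ℕ) ≠ 0 := fun h => ha ((hzq a b hab).mpr h)
        simp only [collapse, dif_neg ha, dif_neg hb]
        show G'.r _ _
        refine Gjoin_right ((delPt_zero_rel q _ _).mpr ?_)
        rw [finShift_mk ha, finShift_mk hb]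
        exact hab
    · intro i
      show (optSetoid G').r (collapse n (Sum.inl i)) (collapse n (Sum.inr i))
      by_cases hi : (i : ℕ) = 0
      · simp only [collapse, dif_pos hi]
        trivial
      · simp only [collapse, dif_neg hi]
        exact Gjoin_mix (delPt 0 p) (delPt 0 q) _
  · rw [Setoid.le_def]
    intro x y h
    replace h : (optSetoid G').r (collapse n x) (collapse n y) := h
    -- h : (optSetoid G').r (collapse n x) (collapse n y)
    rcases x with a | a <;> rcases y with b | b <;>
      by_cases ha : (a : ℕ) = 0 <;> by_cases hb : (b : ℕ) = 0
    · have : a = b := Fin.ext (ha.trans hb.symm)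
      subst this
      exact (Gjoin p q).refl _
    · simp only [collapse, dif_pos ha, dif_neg hb] at h
      exact (optSetoid_none_some h).elim
    · simp only [collapse, dif_neg ha, dif_pos hb] at h
      exact (optSetoid_some_none h).elim
    · simp only [collapse, dif_neg ha, dif_neg hb] at h
      have h2 := shiftrel _ _ (show G'.r (Sum.inl _) (Sum.inl _) from h)
      simp only [Sum.map_inl] at h2
      rw [finShift_mk ha, finShift_mk hb] at h2
      exact h2
    · have ha' : a = ⟨0, hn⟩ := Fin.ext ha
      have hb' : b = ⟨0, hn⟩ := Fin.ext hb
      subst ha'; subst hb'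
      exact Gjoin_mix p q _
    · simp only [collapse, dif_pos ha, dif_neg hb] at h
      exact (optSetoid_none_some h).elim
    · simp only [collapse, dif_neg ha, dif_pos hb] at h
      exact (optSetoid_some_none h).elim
    · simp only [collapse, dif_neg ha, dif_neg hb] at h
      have h2 := shiftrel _ _ (show G'.r (Sum.inl _) (Sum.inr _) from h)
      simp only [Sum.map_inl, Sum.map_inr] at h2
      rw [finShift_mk ha, finShift_mk hb] at h2
      exact h2
    · have ha' : a = ⟨0, hn⟩ := Fin.ext ha
      have hb' : b = ⟨0, hn⟩ := Fin.ext hb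
      subst ha'; subst hb'
      exact (Gjoin p q).symm (Gjoin_mix p q _)
    · simp only [collapse, dif_pos ha, dif_neg hb] at h
      exact (optSetoid_none_some h).elim
    · simp only [collapse, dif_neg ha, dif_pos hb] at h
      exact (optSetoid_some_none h).elim
    · simp only [collapse, dif_neg ha, dif_neg hb] at h
      have h2 := shiftrel _ _ (show G'.r (Sum.inr _) (Sum.inl _) from h)
      simp only [Sum.map_inl, Sum.map_inr] at h2
      rw [finShift_mk ha, finShift_mk hb] at h2
      exact h2
    · have : a = b := Fin.ext (ha.trans hb.symm)
      subst this
      exact (Gjoin p q).refl _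
    · simp only [collapse, dif_pos ha, dif_neg hb] at h
      exact (optSetoid_none_some h).elim
    · simp only [collapse, dif_neg ha, dif_pos hb] at h
      exact (optSetoid_some_none h).elim
    · simp only [collapse, dif_neg ha, dif_neg hb] at h
      have h2 := shiftrel _ _ (show G'.r (Sum.inr _) (Sum.inr _) from h)
      simp only [Sum.map_inr] at h2
      rw [finShift_mk ha, finShift_mk hb] at h2
      exact h2

lemma rl_succ (hn : 1 ≤ n) (p q : Setoid (Fin n))
    (hp : IsSingletonPt p ⟨0, hn⟩) (hq : IsSingletonPt q ⟨0, hn⟩) :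
    rl p q = rl (delPt 0 p) (delPt 0 q) + 1 := by
  rw [rl, rl, Gjoin_collapse hn p q hp hq]
  rw [Nat.card_congr (quotCongrSurj (collapse n) (collapse_surj hn) _),
    Nat.card_congr (quotOpt _), Finite.card_option]

end Aux3
section Aux4

variable {n : ℕ}

lemma mem_Wzero (p : Setoid (Fin n)) : p ∈ Wset n 0 ↔ ¬ IsCrossing p := by
  constructor
  · exact fun h => h.1
  · intro h
    refine ⟨h, ?_, fun i j hi hj _ => Fin.ext (by omega)⟩
    intro i hi
    exact absurd hi (by norm_num)

lemma mem_Wone (hn : 0 < n) (p : Setoid (Fin n)) :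
    p ∈ Wset n 1 ↔ ¬ IsCrossing p ∧ ¬ IsSingletonPt p ⟨0, hn⟩ := by
  constructor
  · rintro ⟨h1, h2, _⟩
    exact ⟨h1, h2 ⟨0, hn⟩ (by norm_num)⟩
  · rintro ⟨h1, h2⟩
    refine ⟨h1, ?_, fun i j hi hj _ => Fin.ext (by omega)⟩
    intro i hi hsing
    have hi' : (i : ℕ) < 1 := by
      have he : (if 1 % 2 = 0 then 1 / 2 else 1 / 2 + 1) = 1 := by norm_num
      rwa [he] at hi
    have : i = ⟨0, hn⟩ := Fin.ext (by simp only [Fin.val_mk]; omega)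
    exact h2 (this ▸ hsing)

lemma Yzero_eq (hn : 0 < n) :
    Yset n 0 = {p : Setoid (Fin n) | ¬ IsCrossing p ∧ IsSingletonPt p ⟨0, hn⟩} := by
  ext p
  simp only [Yset, Set.mem_diff, Set.mem_setOf_eq, mem_Wzero, mem_Wone hn]
  constructor
  · rintro ⟨h1, h2⟩
    refine ⟨h1, ?_⟩
    by_contra hs
    exact h2 ⟨h1, hs⟩
  · rintro ⟨h1, h2⟩
    exact ⟨h1, fun h => h.2 h2⟩

lemma rel_char (hn : 0 < n) {p : Setoid (Fin n)} (h0 : IsSingletonPt p ⟨0, hn⟩)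
    (a b : Fin n) :
    p.r a b ↔ (a = b ∨ ∃ a' b' : Fin (n - 1),
      finShift a' = a ∧ finShift b' = b ∧ (delPt 0 p).r a' b') := by
  constructor
  · intro h
    by_cases ha : (a : ℕ) = 0
    · have ha' : a = ⟨0, hn⟩ := Fin.ext ha
      subst ha'
      exact Or.inl (h0 b h).symm
    · by_cases hb : (b : ℕ) = 0
      · have hb' : b = ⟨0, hn⟩ := Fin.ext hb
        subst hb'
        exact absurd (h0 a (p.symm h)) (fun he => ha (by simp [he]))
      · refine Or.inr ⟨⟨(a : ℕ) - 1, by have := a.isLt; omega⟩,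
          ⟨(b : ℕ) - 1, by have := b.isLt; omega⟩, finShift_mk ha, finShift_mk hb, ?_⟩
        rw [delPt_zero_rel, finShift_mk ha, finShift_mk hb]
        exact h
  · rintro (rfl | ⟨a', b', rfl, rfl, h⟩)
    · exact p.refl a
    · exact (delPt_zero_rel p a' b').mp h

/-- insert `0` as a singleton -/
def liftSetoid (q : Setoid (Fin (n - 1))) : Setoid (Fin n) where
  r a b := a = b ∨ ∃ a' b' : Fin (n - 1), finShift a' = a ∧ finShift b' = b ∧ q.r a' b'
  iseqv := by
    constructor
    · exact fun a => Or.inl rfl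
    · rintro a b (rfl | ⟨a', b', rfl, rfl, h⟩)
      · exact Or.inl rfl
      · exact Or.inr ⟨b', a', rfl, rfl, q.symm h⟩
    · rintro a b c (rfl | ⟨a', b', rfl, rfl, h⟩) h2
      · exact h2
      · rcases h2 with h2 | ⟨b'', c', hb, rfl, h3⟩
        · exact Or.inr ⟨a', b', rfl, h2, h⟩
        · have hbb : b'' = b' := finShift_injective hb
          subst hbb
          exact Or.inr ⟨a', c', rfl, rfl, q.trans h h3⟩

lemma liftSetoid_singleton (hn : 0 < n) (q : Setoid (Fin (n - 1))) :
    IsSingletonPt (liftSetoid (n := n) q) ⟨0, hn⟩ := by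
  rintro j (h | ⟨a', b', ha, rfl, h⟩)
  · exact h.symm
  · exact absurd (congrArg (fun x : Fin n => (x : ℕ)) ha) (by simp [finShift])

lemma liftSetoid_not_crossing (q : Setoid (Fin (n - 1))) (hq : ¬ IsCrossing q) :
    ¬ IsCrossing (liftSetoid (n := n) q) := by
  rintro ⟨a, b, c, d, hab, hbc, hcd, r1, r2, r3⟩
  rcases r1 with rfl | ⟨a', c', rfl, rfl, h1⟩
  · exact absurd rfl (lt_trans hab hbc).ne
  rcases r2 with h | ⟨b', d', rfl, hd, h2⟩
  · exact absurd h (lt_trans hbc hcd).ne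
  subst hd
  refine hq ⟨a', b', c', d', ?_, ?_, ?_, h1, h2, fun h => r3 (Or.inr ⟨a', b', rfl, rfl, h⟩)⟩
  · simpa only [finShift, Fin.lt_def, add_lt_add_iff_right] using hab
  · simpa only [finShift, Fin.lt_def, add_lt_add_iff_right] using hbc
  · simpa only [finShift, Fin.lt_def, add_lt_add_iff_right] using hcd

lemma delPt_liftSetoid (q : Setoid (Fin (n - 1))) :
    delPt 0 (liftSetoid (n := n) q) = q := by
  apply Setoid.ext
  intro i j
  rw [show (delPt 0 (liftSetoid (n := n) q)).r i j ↔
      (liftSetoid (n := n) q).r (finShift i) (finShift j) from Iff.rfl]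
  constructor
  · rintro (h | ⟨a', b', ha, hb, h⟩)
    · exact (finShift_injective h) ▸ q.refl _
    · have : a' = i := finShift_injective ha
      subst this
      have : b' = j := finShift_injective hb
      subst this
      exact h
  · intro h
    exact Or.inr ⟨i, j, rfl, rfl, h⟩

lemma rflawless_zero (p q : Setoid (Fin n)) : RFlawless 0 p q := by
  refine ⟨fun i j hi hj _ => Fin.ext (by omega), fun i j hi hj _ => Fin.ext (by omega),
    fun i hi => absurd hi (by omega), fun h => absurd h (by norm_num)⟩

end Aux4


/-- Case `r = 0`, `n ≥ 2`: (a) `Y(n,0)` consists exactly of the noncrossing partitions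
of `Fin n` in which the point `1` (index `0`) is a singleton; (b) deleting the point `1`
is a bijection from `Y(n,0)` onto `W(n-1,0)` (the noncrossing partitions of `Fin (n-1)`);
(c) `e_0(p,q) = N · e_0(α(p), α(q))`. Consequently `B(n,0)` equals `N · A(n-1,0)` up to
a simultaneous permutation of rows and columns. -/
theorem B_eq_A_zero (N : ℕ) (hN : 1 ≤ N) (n : ℕ) (hn : 2 ≤ n) :
    Yset n 0 = {p : Setoid (Fin n) | ¬ IsCrossing p ∧ IsSingletonPt p ⟨0, by omega⟩} ∧
    Set.BijOn (delPt 0) (Yset n 0) (Wset (n - 1) 0) ∧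
    (∀ p ∈ Yset n 0, ∀ q ∈ Yset n 0,
      eEnt N 0 p q = (N : ℝ) * eEnt N 0 (delPt 0 p) (delPt 0 q)) ∧
    (∃ σ : ↥(Yset n 0) ≃ ↥(Wset (n - 1) 0),
      ∀ p q : ↥(Yset n 0),
        eEnt N 0 p.1 q.1 = (N : ℝ) * eEnt N 0 (σ p).1 (σ q).1) := by
  have hn0 : 0 < n := by omega
  have ha : Yset n 0 =
      {p : Setoid (Fin n) | ¬ IsCrossing p ∧ IsSingletonPt p ⟨0, by omega⟩} :=
    Yzero_eq hn0
  have hb : Set.BijOn (delPt 0) (Yset n 0) (Wset (n - 1) 0) := by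
    refine ⟨?_, ?_, ?_⟩
    · intro p hp
      rw [Yzero_eq hn0] at hp
      refine (mem_Wzero _).mpr ?_
      rintro ⟨a, b, c, d, h1, h2, h3, r1, r2, r3⟩
      exact hp.1 ⟨finShift a, finShift b, finShift c, finShift d, finShift_lt h1,
        finShift_lt h2, finShift_lt h3, (delPt_zero_rel p a c).mp r1,
        (delPt_zero_rel p b d).mp r2, fun h => r3 ((delPt_zero_rel p a b).mpr h)⟩
    · intro p hp q hq hpq
      rw [Yzero_eq hn0] at hp hq
      apply Setoid.ext
      intro a b
      constructor
      · intro h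
        rcases (rel_char hn0 hp.2 a b).mp h with rfl | ⟨a', b', rfl, rfl, hr⟩
        · exact q.refl _
        · exact (rel_char hn0 hq.2 _ _).mpr (Or.inr ⟨a', b', rfl, rfl, hpq ▸ hr⟩)
      · intro h
        rcases (rel_char hn0 hq.2 a b).mp h with rfl | ⟨a', b', rfl, rfl, hr⟩
        · exact p.refl _
        · exact (rel_char hn0 hp.2 _ _).mpr (Or.inr ⟨a', b', rfl, rfl, hpq ▸ hr⟩)
    · intro q hq
      replace hq := (mem_Wzero q).mp hq
      refine ⟨liftSetoid q, ?_, delPt_liftSetoid q⟩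
      rw [Yzero_eq hn0]
      exact ⟨liftSetoid_not_crossing q hq, liftSetoid_singleton hn0 q⟩
  have hc : ∀ p ∈ Yset n 0, ∀ q ∈ Yset n 0,
      eEnt N 0 p q = (N : ℝ) * eEnt N 0 (delPt 0 p) (delPt 0 q) := by
    intro p hp q hq
    rw [Yzero_eq hn0] at hp hq
    rw [eEnt, eEnt, if_pos (rflawless_zero _ _), if_pos (rflawless_zero _ _),
      rl_succ hn0 p q hp.2 hq.2, pow_succ]
    ring
  exact ⟨ha, hb, hc, ⟨Set.BijOn.equiv (delPt 0) hb, fun p q => hc p.1 p.2 q.1 q.2⟩⟩
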